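/- arXiv:2103.08696 — 5 statements merged into one kernel-verified Lean document; each statement's English description precedes it below -/
import Mathlib

section
/- Dual property of the dual-support (discrete scalar form): for every finite index set I, every function f : I × I → ℝ, every field u : I → ℝ, every volume function V : I → ℝ, and every support map S, one has ∑_{i∈I} ∑_{j∈S(i)} f(i,j)·(u(j) − u(i))·V(j)·V(i) = ∑_{i∈I} ( ∑_{j∈S'(i)} f(j,i)·V(j) − ∑_{j∈S(i)} f(i,j)·V(j) )·u(i)·V(i). -/
open Finset

lemma swap_aux {I : Type*} [Fintype I] [DecidableEq I] (S : I → Finset I)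
    (F : I → I → ℝ) : ∑ i, ∑ j ∈ S i, F i j
      = ∑ i, ∑ j ∈ univ.filter (fun j => i ∈ S j), F j i := by
  have h1 : ∀ i, ∑ j ∈ S i, F i j = ∑ j, if j ∈ S i then F i j else 0 := by
    intro i
    rw [Finset.sum_ite_mem, Finset.univ_inter]
  have h2 : ∀ i, ∑ j ∈ univ.filter (fun j => i ∈ S j), F j i
      = ∑ j, if i ∈ S j then F j i else 0 := by
    intro i
    rw [Finset.sum_filter]
  simp only [h1, h2]
  exact Finset.sum_comm

/-- Dual property of the dual-support (discrete scalar form). -/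
theorem dual_support_scalar {I : Type*} [Fintype I] [DecidableEq I]
    (f : I → I → ℝ) (u : I → ℝ) (V : I → ℝ) (S : I → Finset I) :
    ∑ i, ∑ j ∈ S i, f i j * (u j - u i) * V j * V i
      = ∑ i, ((∑ j ∈ univ.filter (fun j => i ∈ S j), f j i * V j)
              - ∑ j ∈ S i, f i j * V j) * u i * V i := by
  have key := swap_aux S (fun i j => f i j * u j * V j * V i)
  simp only [mul_sub, sub_mul, Finset.sum_sub_distrib, Finset.sum_mul] at *
  rw [key]
  congr 1 <;> refine Finset.sum_congr rfl fun i _ => Finset.sum_congr rfl fun j _ => by ring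
end

section
/- Hourglass internal force from the stability functional (discrete form of Eq. (42)): in the discrete nonlocal setting, suppose each point i ∈ I carries weights ω_i : S(i) → ℝ, monomial vectors p_i : S(i) → ℝ^m with invertible Gram matrix A_i := ∑_{j∈S(i)} ω_i(j)·p_i(j)·p_i(j)ᵀ·V(j), a penalty constant c_i > 0, and for a field u : I → ℝ define a*_i(u) := A_i⁻¹·(∑_{j∈S(i)} ω_i(j)·(u(j)−u(i))·p_i(j)·V(j)) and the total hourglass energy 𝓕(u) := ∑_{i∈I} (c_i/2)·∑_{j∈S(i)} ω_i(j)·( u(j) − u(i) − ⟪p_i(j), a*_i(u)⟫ )²·V(j)·V(i). Then 𝓕 is differentiable and for every variation δ : I → ℝ, (d/dt)𝓕(u + t·δ)|_{t=0} = ∑_{i∈I} ( ∑_{j∈S'(i)} ω_j(i)·c_j·( u(i) − u(j) − ⟪p_j(i), a*_j(u)⟫ )·V(j) − ∑_{j∈S(i)} ω_i(j)·c_i·( u(j) − u(i) − ⟪p_i(j), a*_i(u)⟫ )·V(j) )·δ(i)·V(i). -/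
open Finset Matrix

/-! Each residual `u j - u i - ⟪p i j, a*_i(u)⟫` is linear in `u`, so `𝓕` is a weighted sum of
squares of linear forms and its derivative along `δ` pairs the residuals of `u` with those of `δ`.
Because `a*_i(u)` solves the weighted least-squares normal equations `A_i a = b_i(u)`, the residual
of `u` is orthogonal to every `p i j`, which removes the `a*_i(δ)` part of the residuals of `δ`.
What is left, `∑ᵢ ∑_{j ∈ S i} Kᵢⱼ (δ j - δ i)`, is regrouped by exchanging the double sum, which
turns the `δ j` terms into a sum over the dual support `S'(i)`. -/

section NormalEquations

variable {R ι n : Type*} [CommRing R] [Fintype n]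

theorem sum_smul_vecMulVec_mulVec (s : Finset ι) (w : ι → R) (q : ι → n → R) (x : n → R) :
    (∑ j ∈ s, w j • vecMulVec (q j) (q j)) *ᵥ x = ∑ j ∈ s, (w j * (q j ⬝ᵥ x)) • q j := by
  simp only [sum_mulVec, smul_mulVec, vecMulVec_mulVec, op_smul_eq_smul, smul_smul]

theorem sum_mul_sub_dotProduct_mul_dotProduct_eq_zero (s : Finset ι) (w y : ι → R) (q : ι → n → R)
    {x : n → R} (hx : (∑ j ∈ s, w j • vecMulVec (q j) (q j)) *ᵥ x = ∑ j ∈ s, (w j * y j) • q j)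
    (z : n → R) : ∑ j ∈ s, w j * (y j - q j ⬝ᵥ x) * (q j ⬝ᵥ z) = 0 := by
  have hres : ∑ j ∈ s, (w j * (y j - q j ⬝ᵥ x)) • q j = 0 := by
    simp only [mul_sub, sub_smul, sum_sub_distrib, ← hx, sum_smul_vecMulVec_mulVec, sub_self]
  calc ∑ j ∈ s, w j * (y j - q j ⬝ᵥ x) * (q j ⬝ᵥ z)
      = (∑ j ∈ s, (w j * (y j - q j ⬝ᵥ x)) • q j) ⬝ᵥ z := by
        simp only [sum_dotProduct, smul_dotProduct, smul_eq_mul]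
    _ = 0 := by rw [hres, zero_dotProduct]

end NormalEquations

theorem sum_sum_mul_sub_eq_sum_filter_mem {ι R : Type*} [Fintype ι] [DecidableEq ι] [CommRing R]
    (S : ι → Finset ι) (f : ι → ι → R) (g : ι → R) :
    ∑ i, ∑ j ∈ S i, f i j * (g j - g i) =
      ∑ i, (∑ j ∈ univ.filter (fun j => i ∈ S j), f j i - ∑ j ∈ S i, f i j) * g i := by
  have hswap : ∑ i, ∑ j ∈ S i, f i j * g j
      = ∑ i, ∑ j ∈ univ.filter (fun j => i ∈ S j), f j i * g i :=
    sum_comm' fun i j => by simp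
  simp only [mul_sub, sum_sub_distrib, hswap, sub_mul, sum_mul]

section QuadraticForm

variable {ι κ E : Type*} (s : Finset ι) (t : ι → Finset κ) (k : ι → κ → ℝ)

theorem hasDerivAt_sum_sum_mul_sq_add_smul [AddCommGroup E] [Module ℝ E]
    (ℓ : ι → κ → E →ₗ[ℝ] ℝ) (u δ : E) :
    HasDerivAt (fun τ : ℝ => ∑ i ∈ s, ∑ j ∈ t i, k i j * ℓ i j (u + τ • δ) ^ 2)
      (∑ i ∈ s, ∑ j ∈ t i, 2 * k i j * ℓ i j u * ℓ i j δ) 0 := by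
  simp only [map_add, map_smul, smul_eq_mul]
  refine HasDerivAt.fun_sum fun i _ => HasDerivAt.fun_sum fun j _ => ?_
  have hline := (hasDerivAt_mul_const (x := (0 : ℝ)) (ℓ i j δ)).const_add (ℓ i j u)
  refine ((hline.fun_pow 2).const_mul (k i j)).congr_deriv ?_
  norm_num
  ring

theorem differentiable_sum_sum_mul_sq [NormedAddCommGroup E] [NormedSpace ℝ E]
    [FiniteDimensional ℝ E] (ℓ : ι → κ → E →ₗ[ℝ] ℝ) :
    Differentiable ℝ (fun u => ∑ i ∈ s, ∑ j ∈ t i, k i j * ℓ i j u ^ 2) := by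
  have hℓ : ∀ i j, Differentiable ℝ (ℓ i j) := fun i j =>
    (ℓ i j).toContinuousLinearMap.differentiable
  fun_prop

end QuadraticForm

section Hourglass

variable {R I n : Type*} [CommRing R] [Fintype n] [DecidableEq n]
  (V : I → R) (S : I → Finset I) (ω : I → I → R) (p : I → I → n → R)
  (A : I → Matrix n n R) (aStar : (I → R) → I → n → R)

theorem isLinearMap_residual
    (haStar : ∀ u i, aStar u i = (A i)⁻¹ *ᵥ (∑ j ∈ S i, (ω i j * (u j - u i) * V j) • p i j))
    (i j : I) : IsLinearMap R (fun u : I → R => u j - u i - p i j ⬝ᵥ aStar u i) := by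
  constructor
  · intro u v
    simp only [haStar, Pi.add_apply, add_sub_add_comm, mul_add, add_mul, add_smul,
      sum_add_distrib, mulVec_add, dotProduct_add]
  · intro r u
    simp only [haStar, Pi.smul_apply, smul_eq_mul, ← mul_sub, ← smul_smul, ← smul_sum,
      mul_left_comm _ r, mul_assoc, mulVec_smul, dotProduct_smul]

theorem sum_mul_residual_mul_dotProduct_eq_zero
    (hA : ∀ i, A i = ∑ j ∈ S i, (ω i j * V j) • vecMulVec (p i j) (p i j))
    (hInv : ∀ i, IsUnit (A i).det)
    (haStar : ∀ u i, aStar u i = (A i)⁻¹ *ᵥ (∑ j ∈ S i, (ω i j * (u j - u i) * V j) • p i j))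
    (u : I → R) (i : I) (z : n → R) :
    ∑ j ∈ S i, ω i j * V j * (u j - u i - p i j ⬝ᵥ aStar u i) * (p i j ⬝ᵥ z) = 0 := by
  refine sum_mul_sub_dotProduct_mul_dotProduct_eq_zero _ _ _ _ ?_ z
  rw [← hA, haStar, mulVec_mulVec, mul_nonsing_inv _ (hInv i), one_mulVec]
  exact sum_congr rfl fun j _ => by rw [mul_right_comm]

end Hourglass

theorem hourglass_internal_force_general {I : Type*} [Fintype I] [DecidableEq I] {m : ℕ}
    (V : I → ℝ) (S : I → Finset I)
    (ω : I → I → ℝ) (p : I → I → Fin m → ℝ)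
    (A : I → Matrix (Fin m) (Fin m) ℝ)
    (hA : ∀ i, A i = ∑ j ∈ S i, (ω i j * V j) • vecMulVec (p i j) (p i j))
    (hInv : ∀ i, IsUnit (A i).det)
    (c : I → ℝ)
    (aStar : (I → ℝ) → I → Fin m → ℝ)
    (haStar : ∀ u i, aStar u i = (A i)⁻¹ *ᵥ (∑ j ∈ S i, (ω i j * (u j - u i) * V j) • p i j))
    (F : (I → ℝ) → ℝ)
    (hF : ∀ u, F u = ∑ i, (c i / 2) *
        (∑ j ∈ S i, ω i j * (u j - u i - p i j ⬝ᵥ aStar u i) ^ 2 * V j) * V i) :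
    Differentiable ℝ F ∧
      ∀ u δ : I → ℝ,
        HasDerivAt (fun t : ℝ => F (u + t • δ))
          (∑ i, ((∑ j ∈ univ.filter (fun j => i ∈ S j),
                ω j i * c j * (u i - u j - p j i ⬝ᵥ aStar u j) * V j)
              - ∑ j ∈ S i, ω i j * c i * (u j - u i - p i j ⬝ᵥ aStar u i) * V j)
            * δ i * V i) 0 := by
  let ℓ i j : (I → ℝ) →ₗ[ℝ] ℝ :=
    IsLinearMap.mk' _ (isLinearMap_residual V S ω p A aStar haStar i j)
  have hFℓ : F = fun u => ∑ i, ∑ j ∈ S i, (c i / 2 * ω i j * V j * V i) * ℓ i j u ^ 2 := by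
    funext u
    simp only [hF, ℓ, IsLinearMap.mk'_apply, mul_sum, sum_mul]
    exact sum_congr rfl fun i _ => sum_congr rfl fun j _ => by ring
  refine ⟨hFℓ ▸ differentiable_sum_sum_mul_sq _ _ _ ℓ, fun u δ => ?_⟩
  rw [hFℓ]
  convert hasDerivAt_sum_sum_mul_sq_add_smul univ S _ ℓ u δ using 1
  calc _ = ∑ i, ∑ j ∈ S i, c i * ω i j * V j * V i * (u j - u i - p i j ⬝ᵥ aStar u i)
          * (δ j - δ i) := by
        rw [sum_sum_mul_sub_eq_sum_filter_mem]
        refine sum_congr rfl fun i _ => ?_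
        simp only [sum_mul, sub_mul]
        congr 1 <;> exact sum_congr rfl fun j _ => by ring
    _ = ∑ i, ∑ j ∈ S i, c i * ω i j * V j * V i * (u j - u i - p i j ⬝ᵥ aStar u i)
          * (δ j - δ i - p i j ⬝ᵥ aStar δ i) := by
        refine sum_congr rfl fun i _ => ?_
        rw [← sub_zero (∑ j ∈ S i, _), ← mul_zero (c i * V i),
          ← sum_mul_residual_mul_dotProduct_eq_zero V S ω p A aStar hA hInv haStar u i (aStar δ i),
          mul_sum, ← sum_sub_distrib]
        exact sum_congr rfl fun j _ => by ring
    _ = _ := by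
        simp only [ℓ, IsLinearMap.mk'_apply]
        exact sum_congr rfl fun i _ => sum_congr rfl fun j _ => by ring

/-- Hourglass internal force from the stability functional (discrete form of Eq. (42)). -/
theorem hourglass_internal_force {I : Type*} [Fintype I] [DecidableEq I] {m : ℕ}
    (V : I → ℝ) (S : I → Finset I)
    (ω : I → I → ℝ) (p : I → I → Fin m → ℝ)
    (A : I → Matrix (Fin m) (Fin m) ℝ)
    (hA : ∀ i, A i = ∑ j ∈ S i, (ω i j * V j) • vecMulVec (p i j) (p i j))
    (hInv : ∀ i, IsUnit (A i).det)
    (c : I → ℝ) (hc : ∀ i, 0 < c i)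
    (aStar : (I → ℝ) → I → Fin m → ℝ)
    (haStar : ∀ u i, aStar u i = (A i)⁻¹ *ᵥ (∑ j ∈ S i, (ω i j * (u j - u i) * V j) • p i j))
    (F : (I → ℝ) → ℝ)
    (hF : ∀ u, F u = ∑ i, (c i / 2) *
        (∑ j ∈ S i, ω i j * (u j - u i - p i j ⬝ᵥ aStar u i) ^ 2 * V j) * V i) :
    Differentiable ℝ F ∧
      ∀ u δ : I → ℝ,
        HasDerivAt (fun t : ℝ => F (u + t • δ))
          (∑ i, ((∑ j ∈ univ.filter (fun j => i ∈ S j),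
                ω j i * c j * (u i - u j - p j i ⬝ᵥ aStar u j) * V j)
              - ∑ j ∈ S i, ω i j * c i * (u j - u i - p i j ⬝ᵥ aStar u i) * V j)
            * δ i * V i) 0 :=
  hourglass_internal_force_general V S ω p A hA hInv c aStar haStar F hF
end

section
/- Discrete nonlocal elasticity Euler–Lagrange equations (dual-horizon form, Eq. (55)): in the discrete nonlocal setting, let g : I × I → ℝ^d, ω : I × I → ℝ, b : I → ℝ^d, and let φ : ℝ^{d×d} → ℝ be differentiable. For a displacement field u : I → ℝ^d define the nonlocal deformation gradient F_i(u) := 𝟙_d + ∑_{j∈S(i)} ω(i,j)·(u(j)−u(i))·g(i,j)ᵀ·V(j) and the total energy E(u) := ∑_{i∈I} φ(F_i(u))·V(i) − ∑_{i∈I} ⟪b(i), u(i)⟫·V(i). Let P_i ∈ ℝ^{d×d} denote the matrix of partial derivatives (∂φ/∂F_{ab})(F_i(u)), so that the Fréchet derivative of φ at F_i(u) applied to H equals ∑_{a,b}(P_i)_{ab}·H_{ab}. Then for every variation δ : I → ℝ^d, (d/dt)E(u + t·δ)|_{t=0} = ∑_{i∈I} ⟪ ∑_{j∈S'(i)} ω(j,i)·P_j·g(j,i)·V(j)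 − ∑_{j∈S(i)} ω(i,j)·P_i·g(i,j)·V(j) − b(i), δ(i) ⟫·V(i). Consequently u is a critical point of E if and only if for every i ∈ I: ∑_{j∈S(i)} ω(i,j)·P_i·g(i,j)·V(j) − ∑_{j∈S'(i)} ω(j,i)·P_j·g(j,i)·V(j) + b(i) = 0. -/
/-!
The deformation gradient is affine in the displacement, `F(u + tδ) = F(u) + t ∇δ` with `∇` the
nonlocal gradient, so the chain rule gives `dE(u)[δ] = ∑ᵢ ⟪Pᵢ, ∇δᵢ⟫ Vᵢ - ∑ᵢ ⟪bᵢ, δᵢ⟫ Vᵢ`. Each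
`⟪Pᵢ, ∇δᵢ⟫` is a sum over the horizon `S(i)` of terms paired with `δⱼ - δᵢ`; exchanging the order
of summation in the `δⱼ` part moves it onto the dual horizon `S'(i)`. For the critical-point
criterion, test with `δ` equal to the residual itself: every term of the resulting sum is
nonnegative, hence zero.
-/

open Finset Matrix

section Algebra

variable {I n R : Type*} [CommRing R]

theorem sum_sum_dotProduct_sub_eq_sum_dual [Fintype I] [DecidableEq I] [Fintype n]
    (S : I → Finset I) (f : I → I → n → R) (δ : I → n → R) :
    ∑ i, ∑ j ∈ S i, f i j ⬝ᵥ (δ j - δ i) =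
      ∑ i, (∑ j ∈ univ.filter (fun j => i ∈ S j), f j i - ∑ j ∈ S i, f i j) ⬝ᵥ δ i := by
  have hswap : ∑ i, ∑ j ∈ S i, f i j ⬝ᵥ δ j =
      ∑ i, ∑ j ∈ univ.filter (fun j => i ∈ S j), f j i ⬝ᵥ δ i :=
    sum_comm' fun i j => by simp
  simp only [dotProduct_sub, sum_sub_distrib, hswap, sub_dotProduct, sum_dotProduct]

theorem sum_sum_mul_vecMulVec [Fintype n] (P : Matrix n n R) (w v : n → R) :
    ∑ a, ∑ c, P a c * vecMulVec w v a c = (P *ᵥ v) ⬝ᵥ w := by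
  simp only [vecMulVec_apply, mulVec, dotProduct, sum_mul]
  exact sum_congr rfl fun a _ => sum_congr rfl fun c _ => by ring

variable (S : I → Finset I) (ω : I → I → R) (V : I → R) (g : I → I → n → R)

def nonlocalGrad (u : I → n → R) (i : I) : Matrix n n R :=
  ∑ j ∈ S i, (ω i j * V j) • vecMulVec (u j - u i) (g i j)

theorem nonlocalGrad_add_smul (u δ : I → n → R) (t : R) (i : I) :
    nonlocalGrad S ω V g (u + t • δ) i =
      nonlocalGrad S ω V g u i + t • nonlocalGrad S ω V g δ i := by
  simp only [nonlocalGrad, smul_sum, ← sum_add_distrib, Pi.add_apply, Pi.smul_apply,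
    add_sub_add_comm, ← smul_sub, add_vecMulVec, smul_vecMulVec, smul_add, smul_comm t]

theorem sum_sum_mul_nonlocalGrad [Fintype n] (P : Matrix n n R) (δ : I → n → R) (i : I) :
    ∑ a, ∑ c, P a c * nonlocalGrad S ω V g δ i a c =
      ∑ j ∈ S i, ((ω i j * V j) • (P *ᵥ g i j)) ⬝ᵥ (δ j - δ i) := by
  simp only [nonlocalGrad, Matrix.sum_apply, Matrix.smul_apply, smul_eq_mul, mul_sum,
    smul_dotProduct, ← sum_sum_mul_vecMulVec]
  rw [sum_comm_cycle]
  exact sum_congr rfl fun j _ => sum_congr rfl fun a _ => sum_congr rfl fun c _ => by ring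

def nonlocalInternalForce [Fintype I] [DecidableEq I] [Fintype n] (P : I → Matrix n n R) (i : I) :
    n → R :=
  ∑ j ∈ univ.filter (fun j => i ∈ S j), (ω j i * V j) • (P j *ᵥ g j i) -
    ∑ j ∈ S i, (ω i j * V j) • (P i *ᵥ g i j)

theorem sum_sum_mul_nonlocalGrad_mul_eq_sum_internalForce [Fintype I] [DecidableEq I] [Fintype n]
    (P : I → Matrix n n R) (δ : I → n → R) :
    ∑ i, (∑ a, ∑ c, P i a c * nonlocalGrad S ω V g δ i a c) * V i =
      ∑ i, (nonlocalInternalForce S ω V g P i ⬝ᵥ δ i) * V i := by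
  calc ∑ i, (∑ a, ∑ c, P i a c * nonlocalGrad S ω V g δ i a c) * V i
      = ∑ i, ∑ j ∈ S i, ((ω i j * V j * V i) • (P i *ᵥ g i j)) ⬝ᵥ (δ j - δ i) := by
        simp only [sum_sum_mul_nonlocalGrad, sum_mul, smul_dotProduct, smul_eq_mul, mul_right_comm]
    _ = ∑ i, (∑ j ∈ univ.filter (fun j => i ∈ S j), (ω j i * V i * V j) • (P j *ᵥ g j i) -
          ∑ j ∈ S i, (ω i j * V j * V i) • (P i *ᵥ g i j)) ⬝ᵥ δ i :=
        sum_sum_dotProduct_sub_eq_sum_dual S (fun i j => (ω i j * V j * V i) • (P i *ᵥ g i j)) δ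
    _ = ∑ i, (nonlocalInternalForce S ω V g P i ⬝ᵥ δ i) * V i := by
        refine sum_congr rfl fun i _ => ?_
        simp only [nonlocalInternalForce, sub_dotProduct, sum_dotProduct, smul_dotProduct,
          smul_eq_mul, sub_mul, sum_mul]
        congr 1 <;> exact sum_congr rfl fun j _ => by ring

end Algebra

theorem forall_sum_dotProduct_mul_eq_zero_iff {I n R : Type*} [Fintype I] [Fintype n] [Ring R]
    [LinearOrder R] [IsStrictOrderedRing R] {V : I → R} (hV : ∀ i, 0 < V i) (A : I → n → R) :
    (∀ δ : I → n → R, ∑ i, (A i ⬝ᵥ δ i) * V i = 0) ↔ ∀ i, A i = 0 := by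
  refine ⟨fun h i => ?_, fun h δ => by simp [h]⟩
  have hAA : A i ⬝ᵥ A i * V i = 0 :=
    (sum_eq_zero_iff_of_nonneg fun i _ =>
      mul_nonneg (Fintype.sum_nonneg fun _ => mul_self_nonneg _) (hV i).le).mp (h A) i (mem_univ i)
  exact dotProduct_self_eq_zero.mp ((mul_eq_zero.mp hAA).resolve_right (hV i).ne')

section Energy

variable {I n : Type*} [Fintype I] [DecidableEq I] [Fintype n] [DecidableEq n]
  (S : I → Finset I) (ω : I → I → ℝ) (V : I → ℝ) (g : I → I → n → ℝ) (b : I → n → ℝ)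
  (φ : Matrix n n ℝ → ℝ)

def nonlocalEnergy (u : I → n → ℝ) : ℝ :=
  ∑ i, φ (1 + nonlocalGrad S ω V g u i) * V i - ∑ i, (b i ⬝ᵥ u i) * V i

theorem hasDerivAt_nonlocalEnergy_add_smul {u : I → n → ℝ} {P : I → Matrix n n ℝ}
    (hP : ∀ i (H : Matrix n n ℝ), HasDerivAt (fun t : ℝ => φ (1 + nonlocalGrad S ω V g u i + t • H))
      (∑ a, ∑ c, P i a c * H a c) 0) (δ : I → n → ℝ) :
    HasDerivAt (fun t : ℝ => nonlocalEnergy S ω V g b φ (u + t • δ))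
      (∑ i, ((nonlocalInternalForce S ω V g P i - b i) ⬝ᵥ δ i) * V i) 0 := by
  have hline : (fun t : ℝ => nonlocalEnergy S ω V g b φ (u + t • δ)) = fun t =>
      ∑ i, φ (1 + nonlocalGrad S ω V g u i + t • nonlocalGrad S ω V g δ i) * V i -
        ∑ i, (b i ⬝ᵥ u i + t * (b i ⬝ᵥ δ i)) * V i := by
    funext t
    simp only [nonlocalEnergy, nonlocalGrad_add_smul, add_assoc, Pi.add_apply, Pi.smul_apply,
      dotProduct_add, dotProduct_smul, smul_eq_mul]
  have hstrain := HasDerivAt.fun_sum fun i (_ : i ∈ univ) =>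
    (hP i (nonlocalGrad S ω V g δ i)).mul_const (V i)
  have hload := HasDerivAt.fun_sum fun i (_ : i ∈ univ) =>
    ((hasDerivAt_mul_const (x := 0) (b i ⬝ᵥ δ i)).const_add (b i ⬝ᵥ u i)).mul_const (V i)
  rw [hline]
  refine (hstrain.fun_sub hload).congr_deriv ?_
  rw [sum_sum_mul_nonlocalGrad_mul_eq_sum_internalForce, ← sum_sub_distrib]
  simp only [sub_dotProduct, sub_mul]

end Energy

/-- Discrete nonlocal elasticity Euler–Lagrange equations (dual-horizon form, Eq. (55)). -/
theorem nonlocal_elasticity_euler_lagrange {I : Type*} [Fintype I] [DecidableEq I] {d : ℕ}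
    (V : I → ℝ) (hV : ∀ i, 0 < V i)
    (S : I → Finset I)
    (g : I → I → Fin d → ℝ) (ω : I → I → ℝ) (b : I → Fin d → ℝ)
    (φ : Matrix (Fin d) (Fin d) ℝ → ℝ)
    (Fm : (I → Fin d → ℝ) → I → Matrix (Fin d) (Fin d) ℝ)
    (hFm : ∀ u i, Fm u i = 1 + ∑ j ∈ S i, (ω i j * V j) • vecMulVec (u j - u i) (g i j))
    (E : (I → Fin d → ℝ) → ℝ)
    (hE : ∀ u, E u = (∑ i, φ (Fm u i) * V i) - ∑ i, (b i ⬝ᵥ u i) * V i)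
    (u : I → Fin d → ℝ)
    (P : I → Matrix (Fin d) (Fin d) ℝ)
    (hP : ∀ i (H : Matrix (Fin d) (Fin d) ℝ),
        HasDerivAt (fun t : ℝ => φ (Fm u i + t • H)) (∑ a, ∑ c, P i a c * H a c) 0) :
    (∀ δ : I → Fin d → ℝ,
        HasDerivAt (fun t : ℝ => E (u + t • δ))
          (∑ i, (((∑ j ∈ univ.filter (fun j => i ∈ S j), (ω j i * V j) • (P j *ᵥ g j i))
              - (∑ j ∈ S i, (ω i j * V j) • (P i *ᵥ g i j))
              - b i) ⬝ᵥ δ i) * V i) 0)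
    ∧ ((∀ δ : I → Fin d → ℝ, deriv (fun t : ℝ => E (u + t • δ)) 0 = 0)
        ↔ ∀ i, (∑ j ∈ S i, (ω i j * V j) • (P i *ᵥ g i j))
              - (∑ j ∈ univ.filter (fun j => i ∈ S j), (ω j i * V j) • (P j *ᵥ g j i))
              + b i = 0) := by
  obtain rfl : Fm = fun u i => 1 + nonlocalGrad S ω V g u i := funext₂ hFm
  obtain rfl : E = nonlocalEnergy S ω V g b φ := funext hE
  have hderiv := hasDerivAt_nonlocalEnergy_add_smul S ω V g b φ hP
  refine ⟨hderiv, ?_⟩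
  simp only [fun δ => (hderiv δ).deriv]
  rw [forall_sum_dotProduct_mul_eq_zero_iff hV]
  refine forall_congr' fun i => ?_
  rw [← neg_eq_zero]
  exact iff_of_eq (congrArg (· = 0) (by rw [nonlocalInternalForce]; abel))
end

section
/- Discrete nonlocal thin-plate variational identity (Eq. (63)): in the discrete nonlocal setting, let h : I × I → ℝ^{2×2} (Hessian vectors), ω : I × I → ℝ, q : I → ℝ, and constants D₀ and ν. For a deflection field w : I → ℝ define the nonlocal curvature κ_i(w) := ∑_{j∈S(i)} ω(i,j)·(w(j)−w(i))·h(i,j)·V(j), the moment tensor M_i := D₀·( ν·tr(κ_i)·𝟙_2 + (1−ν)·κ_i ), and the total energy E(w) := ∑_{i∈I} ( (1/2)·M_i : κ_i − q(i)·w(i) )·V(i), where A : B := ∑_{a,b} A_{ab}·B_{ab}. Then for every variation δ : I → ℝ, (d/dt)E(w + t·δ)|_{t=0} = ∑_{i∈I} ( ∑_{j∈S'(i)} ω(j,i)·(M_j : h(j,i))·V(j) − ∑_{j∈S(i)} ω(i,j)·(M_i : h(i,j))·V(j) − q(i) )·δ(i)·V(i). Consequently w is a critical point of E if and only if for every i ∈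 I: ∑_{j∈S(i)} ω(i,j)·(M_i : h(i,j))·V(j) − ∑_{j∈S'(i)} ω(j,i)·(M_j : h(j,i))·V(j) + q(i) = 0. -/
/-!
The energy is `E w = ½ B(w, w) - ℓ(w)` for the bending form `B(w, v) = ∑ᵢ (M(κ w)ᵢ : κ(v)ᵢ) Vᵢ`
and the load functional `ℓ(w) = ∑ᵢ qᵢ wᵢ Vᵢ`. The form `B` is symmetric because
`M(K) : L = D₀ (ν tr K tr L + (1 - ν) K : L)`, so along a line `E (w + t δ)` is a quadratic
polynomial in `t` with linear coefficient `B(w, δ) - ℓ(δ)`. Expanding `κ(δ)ᵢ` splits `δⱼ - δᵢ`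
into two sums; exchanging the order of summation in the one carrying `δⱼ` runs over the dual
support and yields the node-wise form, and testing with indicator variations gives the
Euler–Lagrange equations.
-/

open Finset Matrix

theorem LinearMap.BilinForm.IsSymm.hasDerivAt_half_apply_self_sub {X : Type*} [AddCommGroup X]
    [Module ℝ X] {B : LinearMap.BilinForm ℝ X} (hB : B.IsSymm) (ℓ : Module.Dual ℝ X) (w δ : X) :
    HasDerivAt (fun t : ℝ => 1 / 2 * B (w + t • δ) (w + t • δ) - ℓ (w + t • δ))
      (B w δ - ℓ δ) 0 := by
  have expand : (fun t : ℝ => 1 / 2 * B (w + t • δ) (w + t • δ) - ℓ (w + t • δ)) =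
      fun t => (1 / 2 * B w w - ℓ w + t * (B w δ - ℓ δ)) + t ^ 2 * (1 / 2 * B δ δ) := by
    funext t
    simp only [map_add, map_smul, LinearMap.add_apply, LinearMap.smul_apply, smul_eq_mul,
      hB.eq δ w]
    ring
  rw [expand]
  have linear : HasDerivAt (fun t : ℝ => 1 / 2 * B w w - ℓ w + t * (B w δ - ℓ δ))
      (B w δ - ℓ δ) 0 := by
    simpa using ((hasDerivAt_id (0 : ℝ)).mul_const (B w δ - ℓ δ)).const_add (1 / 2 * B w w - ℓ w)
  have quadratic : HasDerivAt (fun t : ℝ => t ^ 2 * (1 / 2 * B δ δ)) 0 0 := by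
    simpa using (hasDerivAt_pow 2 (0 : ℝ)).mul_const (1 / 2 * B δ δ)
  have sum := linear.add quadratic
  rw [add_zero] at sum
  exact sum

theorem forall_deriv_eq_zero_iff_of_hasDerivAt {I : Type*} [Fintype I] {f : (I → ℝ) → ℝ → ℝ}
    {r V : I → ℝ} (hV : ∀ i, V i ≠ 0) (hf : ∀ δ, HasDerivAt (f δ) (∑ i, r i * δ i * V i) 0) :
    (∀ δ, deriv (f δ) 0 = 0) ↔ ∀ i, r i = 0 := by
  have dot : ∀ δ, deriv (f δ) 0 = (r * V) ⬝ᵥ δ := fun δ => by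
    rw [(hf δ).deriv]
    exact sum_congr rfl fun i _ => by simp only [Pi.mul_apply]; ring
  simp only [dot, dotProduct_eq_zero_iff, funext_iff, Pi.mul_apply, Pi.zero_apply,
    mul_eq_zero, hV, or_false]

theorem Finset.sum_sum_dualSupport {I M : Type*} [Fintype I] [DecidableEq I] [AddCommMonoid M]
    (S : I → Finset I) (f : I → I → M) :
    ∑ i, ∑ j ∈ S i, f i j = ∑ j, ∑ i ∈ univ.filter (fun i => j ∈ S i), f i j :=
  Finset.sum_comm' (by simp)

section Frobenius

variable {R m n : Type*} [CommSemiring R] [Fintype m] [Fintype n]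

def Matrix.frobeniusInner : Matrix m n R →ₗ[R] Matrix m n R →ₗ[R] R :=
  LinearMap.mk₂ R (fun A B => ∑ a, ∑ c, A a c * B a c)
    (fun _ _ _ => by simp only [add_apply, add_mul, sum_add_distrib])
    (fun _ _ _ => by simp only [smul_apply, smul_eq_mul, mul_sum, mul_assoc])
    (fun _ _ _ => by simp only [add_apply, mul_add, sum_add_distrib])
    (fun _ _ _ => by simp only [smul_apply, smul_eq_mul, mul_sum, mul_left_comm])

theorem Matrix.frobeniusInner_apply (A B : Matrix m n R) :
    frobeniusInner A B = ∑ a, ∑ c, A a c * B a c := rfl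

theorem Matrix.frobeniusInner_comm (A B : Matrix m n R) :
    frobeniusInner A B = frobeniusInner B A := by
  simp [frobeniusInner_apply, mul_comm]

theorem Matrix.frobeniusInner_one [DecidableEq n] (B : Matrix n n R) :
    frobeniusInner 1 B = trace B := by
  simp [frobeniusInner_apply, one_apply, trace]

end Frobenius

section Moment

variable {R n : Type*} [CommRing R] [Fintype n] [DecidableEq n]

def momentTensor (D0 ν : R) : Matrix n n R →ₗ[R] Matrix n n R where
  toFun K := (D0 * (ν * trace K)) • (1 : Matrix n n R) + (D0 * (1 - ν)) • K
  map_add' K L := by simp only [trace_add, mul_add, add_smul, smul_add]; abel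
  map_smul' c K := by
    simp only [trace_smul, smul_eq_mul, smul_add, smul_smul, RingHom.id_apply]
    congr 2 <;> ring

theorem frobeniusInner_momentTensor_comm (D0 ν : R) (K L : Matrix n n R) :
    frobeniusInner (momentTensor D0 ν K) L = frobeniusInner (momentTensor D0 ν L) K := by
  simp only [momentTensor, LinearMap.coe_mk, AddHom.coe_mk, map_add, map_smul,
    LinearMap.add_apply, LinearMap.smul_apply, smul_eq_mul, frobeniusInner_one,
    frobeniusInner_comm K L]
  ring

end Moment

section Curvature

variable {I R Y : Type*} [Fintype I] [CommRing R] [AddCommGroup Y] [Module R Y]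
  (S : I → Finset I) (ω : I → I → R) (V : I → R) (h : I → I → Y)

def nonlocalCurvature : (I → R) →ₗ[R] I → Y where
  toFun w i := ∑ j ∈ S i, (ω i j * (w j - w i) * V j) • h i j
  map_add' w v := by
    ext i
    simp only [Pi.add_apply, ← sum_add_distrib, ← add_smul]
    exact sum_congr rfl fun j _ => by ring_nf
  map_smul' c w := by
    ext i
    simp only [Pi.smul_apply, smul_sum, smul_smul, smul_eq_mul, RingHom.id_apply]
    exact sum_congr rfl fun j _ => by ring_nf

theorem sum_apply_nonlocalCurvature_mul [DecidableEq I] (φ : I → Y →ₗ[R] R) (δ : I → R) :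
    ∑ i, φ i (nonlocalCurvature S ω V h δ i) * V i
      = ∑ i, ((∑ j ∈ univ.filter (fun j => i ∈ S j), ω j i * φ j (h j i) * V j)
          - ∑ j ∈ S i, ω i j * φ i (h i j) * V j) * δ i * V i := by
  have expand : ∀ i, φ i (nonlocalCurvature S ω V h δ i) * V i
      = ∑ j ∈ S i, ω i j * φ i (h i j) * V j * V i * δ j
        - (∑ j ∈ S i, ω i j * φ i (h i j) * V j) * δ i * V i := by
    intro i
    simp only [nonlocalCurvature, LinearMap.coe_mk, AddHom.coe_mk, map_sum, map_smul, smul_eq_mul,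
      sum_mul, ← sum_sub_distrib]
    exact sum_congr rfl fun j _ => by ring
  simp only [expand, sum_sub_distrib, sum_sum_dualSupport S, sub_mul, sum_mul]
  congr 1
  exact sum_congr rfl fun i _ => sum_congr rfl fun j _ => by ring

end Curvature

section Bending

variable {I R : Type*} [Fintype I] [CommRing R] (S : I → Finset I) (ω : I → I → R) (V : I → R)
  (h : I → I → Matrix (Fin 2) (Fin 2) R) (D0 ν : R)

def bendingForm : LinearMap.BilinForm R (I → R) :=
  ∑ i, V i • (frobeniusInner ∘ₗ momentTensor D0 ν).compl₁₂
    (LinearMap.proj i ∘ₗ nonlocalCurvature S ω V h) (LinearMap.proj i ∘ₗ nonlocalCurvature S ω V h)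

theorem bendingForm_apply (w v : I → R) :
    bendingForm S ω V h D0 ν w v
      = ∑ i, frobeniusInner (momentTensor D0 ν (nonlocalCurvature S ω V h w i))
          (nonlocalCurvature S ω V h v i) * V i := by
  simp [bendingForm, LinearMap.sum_apply, mul_comm]

theorem isSymm_bendingForm : (bendingForm S ω V h D0 ν).IsSymm :=
  ⟨fun w v => by
    simp only [bendingForm_apply,
      frobeniusInner_momentTensor_comm _ _ (nonlocalCurvature S ω V h w _)]⟩

end Bending

/-- Discrete nonlocal thin-plate variational identity (Eq. (63)). -/
theorem nonlocal_thin_plate_variational {I : Type*} [Fintype I] [DecidableEq I]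
    (V : I → ℝ) (hV : ∀ i, 0 < V i)
    (S : I → Finset I)
    (h : I → I → Matrix (Fin 2) (Fin 2) ℝ)
    (ω : I → I → ℝ) (q : I → ℝ) (D0 ν : ℝ)
    (κ : (I → ℝ) → I → Matrix (Fin 2) (Fin 2) ℝ)
    (hκ : ∀ w i, κ w i = ∑ j ∈ S i, (ω i j * (w j - w i) * V j) • h i j)
    (M : (I → ℝ) → I → Matrix (Fin 2) (Fin 2) ℝ)
    (hM : ∀ w i, M w i = (D0 * (ν * Matrix.trace (κ w i))) • (1 : Matrix (Fin 2) (Fin 2) ℝ)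
        + (D0 * (1 - ν)) • κ w i)
    (E : (I → ℝ) → ℝ)
    (hE : ∀ w, E w = ∑ i, ((1 / 2) * (∑ a, ∑ c, M w i a c * κ w i a c) - q i * w i) * V i)
    (w : I → ℝ) :
    (∀ δ : I → ℝ,
        HasDerivAt (fun t : ℝ => E (w + t • δ))
          (∑ i, ((∑ j ∈ univ.filter (fun j => i ∈ S j),
                ω j i * (∑ a, ∑ c, M w j a c * h j i a c) * V j)
              - (∑ j ∈ S i, ω i j * (∑ a, ∑ c, M w i a c * h i j a c) * V j)
              - q i) * δ i * V i) 0)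
    ∧ ((∀ δ : I → ℝ, deriv (fun t : ℝ => E (w + t • δ)) 0 = 0)
        ↔ ∀ i, (∑ j ∈ S i, ω i j * (∑ a, ∑ c, M w i a c * h i j a c) * V j)
              - (∑ j ∈ univ.filter (fun j => i ∈ S j),
                  ω j i * (∑ a, ∑ c, M w j a c * h j i a c) * V j)
              + q i = 0) := by
  obtain rfl : κ = nonlocalCurvature S ω V h := funext fun w => funext (hκ w)
  obtain rfl : M = fun w i => momentTensor D0 ν (nonlocalCurvature S ω V h w i) :=
    funext fun w => funext (hM w)
  set ℓ : Module.Dual ℝ (I → ℝ) := ∑ i, (q i * V i) • LinearMap.proj i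
  have ℓ_apply : ∀ v, ℓ v = ∑ i, q i * v i * V i := fun v => by
    simp [ℓ, mul_comm, mul_left_comm]
  obtain rfl : E = fun w => 1 / 2 * bendingForm S ω V h D0 ν w w - ℓ w := by
    funext w
    rw [hE, bendingForm_apply, ℓ_apply, mul_sum, ← sum_sub_distrib]
    exact sum_congr rfl fun i _ => by rw [frobeniusInner_apply]; ring
  refine ⟨?variation,
    (forall_deriv_eq_zero_iff_of_hasDerivAt (fun i => (hV i).ne') ?variation).trans ?_⟩
  · intro δ
    convert (isSymm_bendingForm S ω V h D0 ν).hasDerivAt_half_apply_self_sub ℓ w δ using 1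
    rw [bendingForm_apply, sum_apply_nonlocalCurvature_mul, ℓ_apply, ← sum_sub_distrib]
    exact sum_congr rfl fun i _ => by simp only [frobeniusInner_apply]; ring
  · exact forall_congr' fun i => by constructor <;> intro <;> linarith
end

section
/- Discrete nonlocal gradient-elasticity variational identity (Eq. (76)): in the discrete nonlocal setting, let g : I × I → ℝ^d, h : I × I → ℝ^{d×d}, ω : I × I → ℝ, b : I → ℝ^d, and let ψ : ℝ^{d×d} × (ℝ^d → ℝ^{d×d}-indexed third-order tensors ℝ^{d×d×d}) → ℝ be differentiable. For u : I → ℝ^d define G_i(u) := ∑_{j∈S(i)} ω(i,j)·(u(j)−u(i))·g(i,j)ᵀ·V(j), H_i(u) ∈ ℝ^{d×d×d} by (H_i)_{abc} := ∑_{j∈S(i)} ω(i,j)·(u(j)−u(i))_a·(h(i,j))_{bc}·V(j), and E(u) := ∑_{i∈I} ψ(G_i(u), H_i(u))·V(i) − ∑_{i∈I} ⟪b(i), u(i)⟫·V(i). Let σ_i ∈ ℝ^{d×d} and Σ_i ∈ ℝ^{d×d×d} denote the arrays of partial derivatives of ψ with respect to its first and second arguments at (G_i(u), H_i(u)), and write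 (Σ_i : h)_a := ∑_{b,c} (Σ_i)_{abc}·h_{bc}. Then for every variation δ : I → ℝ^d, (d/dt)E(u + t·δ)|_{t=0} = ∑_{i∈I} ⟪ ∑_{j∈S'(i)} ω(j,i)·( σ_j·g(j,i) + Σ_j : h(j,i) )·V(j) − ∑_{j∈S(i)} ω(i,j)·( σ_i·g(i,j) + Σ_i : h(i,j) )·V(j) − b(i), δ(i) ⟫·V(i). -/
/-!
The nonlocal gradient `G` and Hessian `H` are linear in the displacement, so along the line
`u + t • δ` the chain rule gives
`E' = ∑ᵢ (σᵢ : Gᵢ(δ) + Σᵢ ⋮ Hᵢ(δ)) Vᵢ - ∑ᵢ ⟪bᵢ, δᵢ⟫ Vᵢ`.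
Each pairing is a sum over the bonds `j ∈ S(i)` of `ω(i,j) V(j) ⟪σᵢ g(i,j) + Σᵢ : h(i,j), δⱼ - δᵢ⟫`.
Splitting `δⱼ - δᵢ` and exchanging the order of summation in the `δⱼ` part, which turns
`j ∈ S(i)` into `i ∈ S'(j)`, is a nonlocal summation by parts that leaves every term paired with
`δᵢ`.
-/

open Finset Matrix

section Algebra

variable {I n R : Type*} [CommRing R]

def dualSupport [Fintype I] [DecidableEq I] (S : I → Finset I) (i : I) : Finset I :=
  univ.filter fun j => i ∈ S j

def nonlocalGradient (S : I → Finset I) (V : I → R) (ω : I → I → R) (g : I → I → n → R)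
    (u : I → n → R) (i : I) : Matrix n n R :=
  ∑ j ∈ S i, (ω i j * V j) • vecMulVec (u j - u i) (g i j)

def nonlocalHessian (S : I → Finset I) (V : I → R) (ω : I → I → R) (h : I → I → Matrix n n R)
    (u : I → n → R) (i : I) : n → n → n → R :=
  fun a b c => ∑ j ∈ S i, ω i j * (u j a - u i a) * h i j b c * V j

variable (S : I → Finset I) (V : I → R) (ω : I → I → R)

theorem nonlocalGradient_add_smul (g : I → I → n → R) (u δ : I → n → R) (t : R) (i : I) :
    nonlocalGradient S V ω g (u + t • δ) i =
      nonlocalGradient S V ω g u i + t • nonlocalGradient S V ω g δ i := by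
  simp only [nonlocalGradient, smul_sum, ← sum_add_distrib]
  refine sum_congr rfl fun j _ => ?_
  ext a c
  simp only [vecMulVec_apply, Pi.add_apply, Pi.smul_apply, Pi.sub_apply, smul_eq_mul,
    Matrix.smul_apply, Matrix.add_apply]
  ring

theorem nonlocalHessian_add_smul (h : I → I → Matrix n n R) (u δ : I → n → R) (t : R) (i : I) :
    nonlocalHessian S V ω h (u + t • δ) i =
      nonlocalHessian S V ω h u i + t • nonlocalHessian S V ω h δ i := by
  ext a b c
  simp only [nonlocalHessian, Pi.add_apply, Pi.smul_apply, smul_eq_mul, mul_sum,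
    ← sum_add_distrib]
  refine sum_congr rfl fun j _ => ?_
  ring

theorem sum_sum_mul_nonlocalGradient [Fintype n] (g : I → I → n → R) (σ : Matrix n n R)
    (u : I → n → R) (i : I) :
    ∑ a, ∑ c, σ a c * nonlocalGradient S V ω g u i a c =
      ∑ j ∈ S i, ω i j * V j * ((σ *ᵥ g i j) ⬝ᵥ (u j - u i)) := by
  simp only [nonlocalGradient, Matrix.sum_apply, Matrix.smul_apply, vecMulVec_apply, smul_eq_mul,
    mul_sum, dotProduct, mulVec, sum_mul]
  simp_rw [sum_comm (s := S i)]
  refine sum_congr rfl fun j _ => sum_congr rfl fun a _ => sum_congr rfl fun c _ => ?_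
  ring

theorem sum_sum_sum_mul_nonlocalHessian [Fintype n] (h : I → I → Matrix n n R)
    (τ : n → n → n → R) (u : I → n → R) (i : I) :
    ∑ a, ∑ b, ∑ c, τ a b c * nonlocalHessian S V ω h u i a b c =
      ∑ j ∈ S i, ω i j * V j * ((fun a => ∑ b, ∑ c, τ a b c * h i j b c) ⬝ᵥ (u j - u i)) := by
  simp only [nonlocalHessian, dotProduct, mul_sum, sum_mul]
  simp_rw [sum_comm (s := S i)]
  refine sum_congr rfl fun j _ => sum_congr rfl fun a _ => sum_congr rfl fun b _ =>
    sum_congr rfl fun c _ => ?_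
  simp only [Pi.sub_apply]
  ring

theorem nonlocal_sum_by_parts [Fintype I] [DecidableEq I] [Fintype n] (F : I → I → n → R)
    (δ : I → n → R) :
    ∑ i, (∑ j ∈ S i, ω i j * V j * (F i j ⬝ᵥ (δ j - δ i))) * V i =
      ∑ i, ((∑ j ∈ dualSupport S i, (ω j i * V j) • F j i) -
        ∑ j ∈ S i, (ω i j * V j) • F i j) ⬝ᵥ δ i * V i := by
  simp only [sub_dotProduct, sum_dotProduct, smul_dotProduct, smul_eq_mul, dotProduct_sub,
    mul_sub, sum_sub_distrib, sub_mul, sum_mul]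
  congr 1
  rw [sum_comm' fun i j => show i ∈ univ ∧ j ∈ S i ↔ i ∈ dualSupport S j ∧ j ∈ univ by
    simp [dualSupport]]
  exact sum_congr rfl fun i _ => sum_congr rfl fun j _ => by ring

end Algebra

theorem hasDerivAt_dotProduct_add_smul {n : Type*} [Fintype n] (b u δ : n → ℝ) (x : ℝ) :
    HasDerivAt (fun t : ℝ => b ⬝ᵥ (u + t • δ)) (b ⬝ᵥ δ) x := by
  simp only [dotProduct_add, dotProduct_smul, smul_eq_mul]
  exact (hasDerivAt_mul_const (b ⬝ᵥ δ)).const_add (b ⬝ᵥ u)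

/-- Discrete nonlocal gradient-elasticity variational identity (Eq. (76)). -/
theorem nonlocal_gradient_elasticity_variational
    {I : Type*} [Fintype I] [DecidableEq I] {d : ℕ}
    (V : I → ℝ) (S : I → Finset I)
    (g : I → I → Fin d → ℝ) (h : I → I → Matrix (Fin d) (Fin d) ℝ)
    (ω : I → I → ℝ) (b : I → Fin d → ℝ)
    (ψ : Matrix (Fin d) (Fin d) ℝ → (Fin d → Fin d → Fin d → ℝ) → ℝ)
    (G : (I → Fin d → ℝ) → I → Matrix (Fin d) (Fin d) ℝ)
    (hG : ∀ u i, G u i = ∑ j ∈ S i, (ω i j * V j) • vecMulVec (u j - u i) (g i j))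
    (H : (I → Fin d → ℝ) → I → Fin d → Fin d → Fin d → ℝ)
    (hH : ∀ u i a bc cc, H u i a bc cc = ∑ j ∈ S i, ω i j * (u j a - u i a) * h i j bc cc * V j)
    (E : (I → Fin d → ℝ) → ℝ)
    (hE : ∀ u, E u = (∑ i, ψ (G u i) (H u i) * V i) - ∑ i, (b i ⬝ᵥ u i) * V i)
    (u : I → Fin d → ℝ)
    (σ : I → Matrix (Fin d) (Fin d) ℝ) (Sg : I → Fin d → Fin d → Fin d → ℝ)
    (hψ : ∀ i (Hg : Matrix (Fin d) (Fin d) ℝ) (Hh : Fin d → Fin d → Fin d → ℝ),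
        HasDerivAt (fun t : ℝ => ψ (G u i + t • Hg) (H u i + t • Hh))
          ((∑ a, ∑ c, σ i a c * Hg a c) + ∑ a, ∑ bc, ∑ cc, Sg i a bc cc * Hh a bc cc) 0) :
    ∀ δ : I → Fin d → ℝ,
      HasDerivAt (fun t : ℝ => E (u + t • δ))
        (∑ i, (((∑ j ∈ univ.filter (fun j => i ∈ S j),
              (ω j i * V j) • ((σ j *ᵥ g j i) + fun a => ∑ bc, ∑ cc, Sg j a bc cc * h j i bc cc))
            - (∑ j ∈ S i,
              (ω i j * V j) • ((σ i *ᵥ g i j) + fun a => ∑ bc, ∑ cc, Sg i a bc cc * h i j bc cc))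
            - b i) ⬝ᵥ δ i) * V i) 0 := by
  intro δ
  obtain rfl : G = nonlocalGradient S V ω g := funext₂ hG
  obtain rfl : H = nonlocalHessian S V ω h := by ext u i a b c; exact hH u i a b c
  obtain rfl : E = _ := funext hE
  have hψ_line : ∀ i, HasDerivAt (fun t : ℝ => ψ (nonlocalGradient S V ω g (u + t • δ) i)
      (nonlocalHessian S V ω h (u + t • δ) i) * V i)
      (((∑ a, ∑ c, σ i a c * nonlocalGradient S V ω g δ i a c) +
        ∑ a, ∑ bc, ∑ cc, Sg i a bc cc * nonlocalHessian S V ω h δ i a bc cc) * V i) 0 := by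
    intro i
    simp only [nonlocalGradient_add_smul, nonlocalHessian_add_smul]
    exact (hψ i _ _).mul_const (V i)
  refine ((HasDerivAt.fun_sum (u := univ) fun i _ => hψ_line i).sub
    (HasDerivAt.fun_sum (u := univ) fun i _ =>
      (hasDerivAt_dotProduct_add_smul (b i) (u i) (δ i) 0).mul_const (V i))).congr_deriv ?_
  simp only [sum_sum_mul_nonlocalGradient, sum_sum_sum_mul_nonlocalHessian, ← sum_add_distrib,
    ← mul_add, ← add_dotProduct]
  rw [nonlocal_sum_by_parts]
  simp only [sub_dotProduct, sub_mul, sum_sub_distrib]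
  rfl
end
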